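/- Consider the loss function L(w) = (1/(2m))·Σ_{μ=1}^m ‖(∏_{r=1}^R (W^{r,1} + I))x^μ − y^μ‖₂² of a 1-shortcut linear network. For two parameters w₁ = w^{r₁,1}_{i₁,j₁} and w₂ = w^{r₂,1}_{i₂,j₂} lying in different residual units with r₁ > r₂, the second-order partial derivative at the zero weight configuration is: ∂²L/∂w₁∂w₂|_{w=0} = (1/m)·Σ_{μ=1}^m [(x^μ_{i₁} − y^μ_{i₁})·x^μ_{j₂} + x^μ_{j₁}·x^μ_{j₂}] if j₁ = i₂ and i₁ = i₂; (1/m)·Σ_{μ=1}^m (x^μ_{i₁} − y^μ_{i₁})·x^μ_{j₂} if j₁ = i₂ and i₁ ≠ i₂; (1/m)·Σ_{μ=1}^m x^μ_{j₁}·x^μ_{j₂} if j₁ ≠ i₂ and i₁ = i₂; and 0 if j₁ ≠ i₂ and i₁ ≠ i₂. -/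

import Mathlib

noncomputable section

open scoped BigOperators

/-- Matrix–vector product. -/
def mvec {d : ℕ} (M : Fin d → Fin d → ℝ) (v : Fin d → ℝ) : Fin d → ℝ :=
  fun i => ∑ j, M i j * v j

/-- The 1-shortcut linear network: `x ↦ (W^{R,1}+I)⋯(W^{1,1}+I) x`, where the `r`-th
residual unit computes `x ↦ W^{r,1} x + x`. -/
def linNet {d : ℕ} (W : ℕ → Fin d → Fin d → ℝ) : ℕ → (Fin d → ℝ) → (Fin d → ℝ)
  | 0, x => x
  | r + 1, x => fun i => mvec (W r) (linNet W r x) i + linNet W r x i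

/-- The loss function of a 1-shortcut linear network with `R` residual units,
`L(w) = (1/(2m)) ∑_μ ‖(∏_r (W^{r,1}+I)) x^μ − y^μ‖₂²`. -/
def linLoss {d m : ℕ} (R : ℕ) (X Y : Fin m → Fin d → ℝ)
    (W : Fin R → Fin d → Fin d → ℝ) : ℝ :=
  (1 / (2 * (m : ℝ))) * ∑ μ : Fin m, ∑ i,
    (linNet (fun r => if h : r < R then W ⟨r, h⟩ else 0) R (X μ) i - Y μ i) ^ 2

/-- The coordinate direction in weight space corresponding to the parameter `w^{r,1}_{i,j}`. -/
def linDir (R d : ℕ) (r : Fin R) (i j : Fin d) : Fin R → Fin d → Fin d → ℝ :=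
  fun r' i' j' => if r' = r ∧ i' = i ∧ j' = j then 1 else 0

/-- Second-order partial derivative of `f` at `0` along the directions `v₁, v₂`. -/
def d2 {E : Type*} [NormedAddCommGroup E] [NormedSpace ℝ E] (f : E → ℝ) (v₁ v₂ : E) : ℝ :=
  fderiv ℝ (fun w => fderiv ℝ f w v₂) (0 : E) v₁

/-!
Along the plane `w = s • e₁ + t • e₂` spanned by the two coordinate directions, every residual
unit other than `r₂` and `r₁` is the identity, and these two act as rank-one updates
`v ↦ v + t v_{j₂} e_{i₂}` and then `v ↦ v + s v_{j₁} e_{i₁}`. Hence the output on a sample `x` is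
`x + s a + t b + s t c` with `a = x_{j₁} e_{i₁}`, `b = x_{j₂} e_{i₂}` and
`c = [j₁ = i₂] x_{j₂} e_{i₁}`; the `s t` term exists because unit `r₁` acts after unit `r₂`.
The mixed derivative at `0` of `‖u + s a + t b + s t c‖²` is `2 (⟨a, b⟩ + ⟨u, c⟩)`, with
`u = x - y`, which gives the four cases.
-/

lemma d2_eq_deriv_deriv {E : Type*} [NormedAddCommGroup E] [NormedSpace ℝ E]
    {f : E → ℝ} (hf : ContDiff ℝ 2 f) (v₁ v₂ : E) :
    d2 f v₁ v₂ = deriv (fun s : ℝ => deriv (fun t : ℝ => f (s • v₁ + t • v₂)) 0) 0 := by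
  have hderiv : Differentiable ℝ (fun w => fderiv ℝ f w v₂) :=
    ((hf.fderiv_right (m := 1) le_rfl).differentiable one_ne_zero).clm_apply
      (differentiable_const v₂)
  have inner (s : ℝ) : deriv (fun t : ℝ => f (s • v₁ + t • v₂)) 0 = fderiv ℝ f (s • v₁) v₂ :=
    ((hf.differentiable two_ne_zero) _).lineDeriv_eq_fderiv
  simp_rw [inner]
  simpa [d2, lineDeriv] using ((hderiv 0).lineDeriv_eq_fderiv (v := v₁)).symm

lemma hasDerivAt_sq_affine (p q : ℝ) :
    HasDerivAt (fun t : ℝ => (p + t * q) ^ 2) (2 * p * q) 0 := by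
  simpa using (((hasDerivAt_id (0 : ℝ)).mul_const q).const_add p).fun_pow 2

lemma hasDerivAt_mul_affine (p q p' q' : ℝ) :
    HasDerivAt (fun s : ℝ => (p + s * q) * (p' + s * q')) (p * q' + q * p') 0 := by
  have h := (((hasDerivAt_id (0 : ℝ)).mul_const q).const_add p).fun_mul
    (((hasDerivAt_id (0 : ℝ)).mul_const q').const_add p')
  simpa [add_comm] using h

lemma deriv_deriv_sum_sum_sq {κ ι : Type*} [Fintype κ] [Fintype ι] (C : ℝ)
    (u a b c : κ → ι → ℝ) :
    deriv (fun s : ℝ => deriv (fun t : ℝ =>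
        C * ∑ μ, ∑ i, (u μ i + s * a μ i + t * b μ i + s * t * c μ i) ^ 2) 0) 0 =
      2 * C * ∑ μ, (a μ ⬝ᵥ b μ + u μ ⬝ᵥ c μ) := by
  have inner (s : ℝ) : HasDerivAt (fun t : ℝ =>
      C * ∑ μ, ∑ i, (u μ i + s * a μ i + t * b μ i + s * t * c μ i) ^ 2)
      (C * ∑ μ, ∑ i, 2 * (u μ i + s * a μ i) * (b μ i + s * c μ i)) 0 := by
    refine (HasDerivAt.fun_sum fun μ _ => HasDerivAt.fun_sum fun i _ => ?_).const_mul C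
    exact (hasDerivAt_sq_affine _ _).congr_of_eventuallyEq (.of_forall fun t => by ring)
  have outer : HasDerivAt
      (fun s : ℝ => C * ∑ μ, ∑ i, 2 * (u μ i + s * a μ i) * (b μ i + s * c μ i))
      (C * ∑ μ, ∑ i, (2 * u μ i * c μ i + 2 * a μ i * b μ i)) 0 :=
    (HasDerivAt.fun_sum fun μ _ => HasDerivAt.fun_sum fun i _ =>
      (hasDerivAt_mul_affine (2 * u μ i) (2 * a μ i) (b μ i) (c μ i)).congr_of_eventuallyEq
        (.of_forall fun s => by ring)).const_mul C
  simp_rw [fun s => (inner s).deriv, outer.deriv, mul_assoc, Finset.mul_sum, dotProduct,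
    ← Finset.sum_add_distrib, Finset.mul_sum]
  exact Finset.sum_congr rfl fun μ _ => Finset.sum_congr rfl fun i _ => by ring

lemma contDiff_linNet {E : Type*} [NormedAddCommGroup E] [NormedSpace ℝ E] {n : WithTop ℕ∞}
    {d : ℕ} {W : E → ℕ → Fin d → Fin d → ℝ} (hW : ∀ r, ContDiff ℝ n (fun e => W e r))
    (k : ℕ) (x : Fin d → ℝ) : ContDiff ℝ n (fun e => linNet (W e) k x) := by
  induction k with
  | zero => exact contDiff_const
  | succ k ih =>
    refine contDiff_pi.2 fun i => ?_
    exact (ContDiff.sum fun j _ => ((contDiff_pi.1 (contDiff_pi.1 (hW k) i) j).mul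
      (contDiff_pi.1 ih j))).add (contDiff_pi.1 ih i)

lemma contDiff_linLoss {d m : ℕ} {n : WithTop ℕ∞} (R : ℕ) (X Y : Fin m → Fin d → ℝ) :
    ContDiff ℝ n (linLoss R X Y) := by
  have hW (r : ℕ) : ContDiff ℝ n fun W : Fin R → Fin d → Fin d → ℝ =>
      if h : r < R then W ⟨r, h⟩ else 0 := by
    by_cases h : r < R
    · simpa [h] using contDiff_apply ℝ (Fin d → Fin d → ℝ) (⟨r, h⟩ : Fin R)
    · simpa [h] using contDiff_const
  exact contDiff_const.mul <| ContDiff.sum fun μ _ => ContDiff.sum fun i _ =>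
    ((contDiff_pi.1 (contDiff_linNet hW R (X μ)) i).sub contDiff_const).pow 2

def residualUnit {d : ℕ} (M : Fin d → Fin d → ℝ) (v : Fin d → ℝ) : Fin d → ℝ := mvec M v + v

lemma linNet_succ {d : ℕ} (W : ℕ → Fin d → Fin d → ℝ) (k : ℕ) (x : Fin d → ℝ) :
    linNet W (k + 1) x = residualUnit (W k) (linNet W k x) := rfl

lemma residualUnit_zero {d : ℕ} (v : Fin d → ℝ) : residualUnit 0 v = v := by
  ext i; simp [residualUnit, mvec]

lemma linNet_eq_of_eq_zero {d : ℕ} {W : ℕ → Fin d → Fin d → ℝ} {a b : ℕ} (hab : a ≤ b)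
    (hW : ∀ r, a ≤ r → r < b → W r = 0) (x : Fin d → ℝ) : linNet W b x = linNet W a x := by
  induction b, hab using Nat.le_induction with
  | base => rfl
  | succ b hab ih =>
    rw [linNet_succ, hW b hab (lt_add_one b), residualUnit_zero,
      ih fun r h₁ h₂ => hW r h₁ (h₂.trans (lt_add_one b))]

lemma linNet_eq_of_eq_zero_off_pair {d : ℕ} {W : ℕ → Fin d → Fin d → ℝ} {r₁ r₂ K : ℕ}
    (h₂₁ : r₂ < r₁) (h₁K : r₁ < K) (hW : ∀ r, r ≠ r₁ → r ≠ r₂ → W r = 0) (x : Fin d → ℝ) :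
    linNet W K x = residualUnit (W r₁) (residualUnit (W r₂) x) := by
  rw [linNet_eq_of_eq_zero h₁K (fun r h _ => hW r (by omega) (by omega)), linNet_succ,
    linNet_eq_of_eq_zero h₂₁ (fun r h₁ h₂ => hW r (by omega) (by omega)), linNet_succ,
    linNet_eq_of_eq_zero (Nat.zero_le r₂) (fun r _ h => hW r (by omega) (by omega))]
  rfl

lemma linDir_of_ne {R d : ℕ} {r r' : Fin R} (h : r' ≠ r) (i j : Fin d) :
    linDir R d r i j r' = 0 := by
  ext i' j'; simp [linDir, h]

lemma residualUnit_smul_linDir {R d : ℕ} (r : Fin R) (i j : Fin d) (c : ℝ) (v : Fin d → ℝ) :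
    residualUnit (c • linDir R d r i j r) v = v + c • Pi.single i (v j) := by
  ext i'
  by_cases h : i' = i <;> simp [residualUnit, mvec, linDir, h, add_comm]

lemma linNet_smul_linDir_add_smul_linDir {R d : ℕ} {r₁ r₂ : Fin R} (hr : r₂ < r₁)
    (i₁ j₁ i₂ j₂ : Fin d) (s t : ℝ) (x : Fin d → ℝ) :
    linNet (fun r => if h : r < R then
        (s • linDir R d r₁ i₁ j₁ + t • linDir R d r₂ i₂ j₂) ⟨r, h⟩ else 0) R x =
      x + s • Pi.single i₁ (x j₁) + t • Pi.single i₂ (x j₂) +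
        (s * t) • Pi.single i₁ ((Pi.single i₂ (x j₂) : Fin d → ℝ) j₁) := by
  have hne : r₁ ≠ r₂ := hr.ne'
  rw [linNet_eq_of_eq_zero_off_pair (r₁ := r₁) (r₂ := r₂) hr r₁.isLt]
  · simp only [dif_pos r₁.isLt, dif_pos r₂.isLt, Fin.eta, Pi.add_apply, Pi.smul_apply,
      linDir_of_ne hne, linDir_of_ne hne.symm, smul_zero, add_zero, zero_add,
      residualUnit_smul_linDir]
    ext i
    simp only [Pi.add_apply, Pi.smul_apply, smul_eq_mul, Pi.single_apply]
    split_ifs <;> ring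
  · intro r h₁ h₂
    split_ifs with h
    · have h₁' : (⟨r, h⟩ : Fin R) ≠ r₁ := fun e => h₁ (congrArg Fin.val e)
      have h₂' : (⟨r, h⟩ : Fin R) ≠ r₂ := fun e => h₂ (congrArg Fin.val e)
      simp [linDir_of_ne h₁', linDir_of_ne h₂']
    · rfl

/-- Theorem 2, part 3: off-diagonal block `A` of the Hessian. For two
parameters `w₁ = w^{r₁,1}_{i₁,j₁}` and `w₂ = w^{r₂,1}_{i₂,j₂}` in different residual units of a
1-shortcut linear network with `r₁ > r₂`, the second partial of the loss at `w = 0` is given by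
the four-case formula depending on whether `j₁ = i₂` and whether `i₁ = i₂`. -/
theorem one_shortcut_hessian_different_units
    {dx m R : ℕ} (X Y : Fin m → Fin dx → ℝ)
    (r₁ r₂ : Fin R) (hr : r₂ < r₁) (i₁ j₁ i₂ j₂ : Fin dx) :
    d2 (linLoss R X Y) (linDir R dx r₁ i₁ j₁) (linDir R dx r₂ i₂ j₂) =
      if j₁ = i₂ then
        (if i₁ = i₂ then
          (1 / (m : ℝ)) * ∑ μ : Fin m, ((X μ i₁ - Y μ i₁) * X μ j₂ + X μ j₁ * X μ j₂)
        else
          (1 / (m : ℝ)) * ∑ μ : Fin m, (X μ i₁ - Y μ i₁) * X μ j₂)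
      else
        (if i₁ = i₂ then (1 / (m : ℝ)) * ∑ μ : Fin m, X μ j₁ * X μ j₂ else 0) := by
  set u : Fin m → Fin dx → ℝ := fun μ => X μ - Y μ
  set a : Fin m → Fin dx → ℝ := fun μ => Pi.single i₁ (X μ j₁)
  set b : Fin m → Fin dx → ℝ := fun μ => Pi.single i₂ (X μ j₂)
  set c : Fin m → Fin dx → ℝ := fun μ => Pi.single i₁ (b μ j₁)
  have hline (s t : ℝ) : linLoss R X Y (s • linDir R dx r₁ i₁ j₁ + t • linDir R dx r₂ i₂ j₂) =
      1 / (2 * m) * ∑ μ, ∑ i, (u μ i + s * a μ i + t * b μ i + s * t * c μ i) ^ 2 := by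
    simp only [linLoss, linNet_smul_linDir_add_smul_linDir hr]
    congr 1
    refine Finset.sum_congr rfl fun μ _ => Finset.sum_congr rfl fun i _ => ?_
    simp only [u, a, b, c, Pi.add_apply, Pi.smul_apply, Pi.sub_apply, smul_eq_mul]
    ring
  rw [d2_eq_deriv_deriv (contDiff_linLoss R X Y)]
  simp_rw [hline]
  rw [deriv_deriv_sum_sum_sq]
  simp only [u, a, b, c, dotProduct_single, Pi.sub_apply, Pi.single_apply,
    show 2 * (1 / (2 * (m : ℝ))) = 1 / m by ring]
  by_cases hj : j₁ = i₂ <;> by_cases hi : i₁ = i₂ <;> simp [hj, hi, @eq_comm _ i₂ i₁, add_comm]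

end
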